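/- arXiv:1310.6899 — 3 statements merged into one kernel-verified Lean document; each statement's English description precedes it below -/
import Mathlib

section
/- Assume (H1), and (H2) if κ=1, ε ∈ (0,1), w₀ ∈ W, w₁ ∈ W (with w₁ ∈ W ∩ H if κ=1), and let u_ε be a minimizer of J_ε subject to u(0)=w₀, u'(0)=ε w₁. Then there is a constant C independent of ε such that ∫₀^∞ e^{-t} (1/(2ε²))‖u_ε''(t)‖²_{L²} dt ≤ C and ∫₀^∞ e^{-t} (1/(2ε²))‖u_ε'(t)‖²_{L²} dt ≤ C. -/
open MeasureTheory ENNReal Filter Set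
open scoped RealInnerProductSpace NNReal

noncomputable section

/-- The space `L²(ℝⁿ)` of square-integrable real functions. -/
abbrev L2Space (n : ℕ) : Type :=
  MeasureTheory.Lp ℝ 2 (volume : Measure (EuclideanSpace ℝ (Fin n)))

/-- A test function: smooth and compactly supported. -/
def IsTestFun {n : ℕ} (f : EuclideanSpace ℝ (Fin n) → ℝ) : Prop :=
  ContDiff ℝ ((⊤ : ℕ∞) : WithTop ℕ∞) f ∧ HasCompactSupport f

/-- Assumption (H1): the data of the functional `G`, its domain `W` (a Banach space densely and
continuously included in `L²`, containing the test functions densely), weak sequential lower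
semicontinuity, Gâteaux differentiability, and the estimate `‖∇G(v)‖_{W'} ≤ C(1+G(v)^θ)`. -/
structure H1Data (n : ℕ) (W : Type*) [NormedAddCommGroup W] [NormedSpace ℝ W]
    [CompleteSpace W] : Type _ where
  /-- the functional `G : L² → [0,∞]` -/
  G : L2Space n → ℝ≥0∞
  /-- the continuous inclusion `W ↪ L²` -/
  ι : W →L[ℝ] L2Space n
  ι_inj : Function.Injective ι
  denseW : DenseRange ι
  smooth_mem : ∀ f : EuclideanSpace ℝ (Fin n) → ℝ, IsTestFun f →
    ∃ v : W, ⇑(ι v) =ᵐ[volume] f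
  smooth_dense : Dense {v : W | ∃ f : EuclideanSpace ℝ (Fin n) → ℝ,
    IsTestFun f ∧ ⇑(ι v) =ᵐ[volume] f}
  /-- `W = {v ∈ L² : G(v) < ∞}` -/
  domain : ∀ x : L2Space n, G x < ⊤ ↔ x ∈ Set.range ι
  /-- sequential lower semicontinuity with respect to the weak topology of `L²` -/
  wlsc : ∀ (v : ℕ → L2Space n) (v₀ : L2Space n),
    (∀ y : L2Space n, Tendsto (fun k => ⟪v k, y⟫) atTop (nhds ⟪v₀, y⟫)) →
    G v₀ ≤ Filter.liminf (fun k => G (v k)) Filter.atTop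
  /-- the Gâteaux derivative `∇G : W → W'` (extended arbitrarily outside of `range ι`) -/
  gradG : L2Space n → W →L[ℝ] ℝ
  hgrad : ∀ v h : W,
    HasDerivAt (fun δ : ℝ => (G (ι (v + δ • h))).toReal) (gradG (ι v) h) 0
  /-- the constant `C` in the estimate for `∇G` -/
  CG : ℝ
  /-- the exponent `θ ∈ (0,1)` -/
  θ : ℝ
  hCG : 0 ≤ CG
  hθ : θ ∈ Set.Ioo (0 : ℝ) 1
  grad_bound : ∀ v : W, ‖gradG (ι v)‖ ≤ CG * (1 + ((G (ι v)).toReal) ^ θ)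

/-- Assumption (H2): the quadratic dissipative functional `D`, given by a bounded symmetric
nonnegative bilinear form `B` on a Hilbert space `H` densely and continuously included in `L²`,
with `‖v‖_H² = ‖v‖_{L²}² + 2D(v)`, and `D = +∞` outside of `H`. -/
structure H2Data (n : ℕ) (H : Type*) [NormedAddCommGroup H] [NormedSpace ℝ H]
    [CompleteSpace H] : Type _ where
  /-- the functional `D : L² → [0,∞]` -/
  D : L2Space n → ℝ≥0∞
  /-- the continuous inclusion `H ↪ L²` -/
  ιH : H →L[ℝ] L2Space n
  ιH_inj : Function.Injective ιH
  denseH : DenseRange ιH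
  smooth_memH : ∀ f : EuclideanSpace ℝ (Fin n) → ℝ, IsTestFun f →
    ∃ v : H, ⇑(ιH v) =ᵐ[volume] f
  smooth_denseH : Dense {v : H | ∃ f : EuclideanSpace ℝ (Fin n) → ℝ,
    IsTestFun f ∧ ⇑(ιH v) =ᵐ[volume] f}
  /-- the bilinear form `B` -/
  B : H →L[ℝ] H →L[ℝ] ℝ
  B_symm : ∀ x y : H, B x y = B y x
  B_nonneg : ∀ x : H, 0 ≤ B x x
  domainH : ∀ x : L2Space n, D x < ⊤ ↔ x ∈ Set.range ιH
  D_eq : ∀ h : H, D (ιH h) = ENNReal.ofReal (B h h / 2)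
  norm_eq : ∀ h : H, ‖h‖ ^ 2 = ‖ιH h‖ ^ 2 + B h h
  /-- the Gâteaux derivative `∇D : H → H'`, `⟨∇D(v),η⟩ = B(v,η)`
  (extended arbitrarily outside of `range ιH`) -/
  gradD : L2Space n → H →L[ℝ] ℝ
  gradD_eq : ∀ v : H, gradD (ιH v) = B v

/-- An element of `H²_loc([0,∞); L²)`: `u` and its derivative `d = u'` are locally absolutely
continuous (primitives of their derivatives), and `dd = u''` belongs to `L²((0,T);L²)` for
every `T > 0`. -/
structure Traj (n : ℕ) where
  /-- the function `u` -/
  u : ℝ → L2Space n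
  /-- the derivative `u'` -/
  d : ℝ → L2Space n
  /-- the second derivative `u''` -/
  dd : ℝ → L2Space n
  memL2 : ∀ T > 0, MemLp dd 2 (volume.restrict (Set.Ioc (0 : ℝ) T))
  int_dd : ∀ T > 0, IntervalIntegrable dd volume 0 T
  int_d : ∀ T > 0, IntervalIntegrable d volume 0 T
  hd : ∀ t ≥ (0 : ℝ), d t = d 0 + ∫ s in (0 : ℝ)..t, dd s
  hu : ∀ t ≥ (0 : ℝ), u t = u 0 + ∫ s in (0 : ℝ)..t, d s

/-- An element of `H¹_loc([0,∞); L²)`: `u` is locally absolutely continuous with derivative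
`d = u'` in `L²((0,T);L²)` for every `T > 0`. -/
structure Traj1 (n : ℕ) where
  /-- the function `u` -/
  u : ℝ → L2Space n
  /-- the derivative `u'` -/
  d : ℝ → L2Space n
  memL2 : ∀ T > 0, MemLp d 2 (volume.restrict (Set.Ioc (0 : ℝ) T))
  int_d : ∀ T > 0, IntervalIntegrable d volume 0 T
  hu : ∀ t ≥ (0 : ℝ), u t = u 0 + ∫ s in (0 : ℝ)..t, d s

variable {n : ℕ}

/-- `D_ε(t) = ‖u''(t)‖²/(2ε²)`, as an extended real. -/
def DD (ε : ℝ) (u : Traj n) (t : ℝ) : ℝ≥0∞ := ENNReal.ofReal (‖u.dd t‖ ^ 2 / (2 * ε ^ 2))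

/-- `K_ε(t) = ‖u'(t)‖²/(2ε²)`, the kinetic energy. -/
def KK (ε : ℝ) (u : Traj n) (t : ℝ) : ℝ := ‖u.d t‖ ^ 2 / (2 * ε ^ 2)

/-- `K_ε'(t) = ⟨u'(t),u''(t)⟩/ε²`, the a.e. derivative of the kinetic energy. -/
def KK' (ε : ℝ) (u : Traj n) (t : ℝ) : ℝ := ⟪u.d t, u.dd t⟫ / ε ^ 2

section Defs

variable {W H : Type*} [NormedAddCommGroup W] [NormedSpace ℝ W] [CompleteSpace W]
  [NormedAddCommGroup H] [NormedSpace ℝ H] [CompleteSpace H]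

/-- The Lagrangian `L_ε(t) = D_ε(t) + W_ε(t) + (κ/ε)H_ε(t)`. -/
def LL (P : H1Data n W) (Q : H2Data n H) (κ : ℕ) (ε : ℝ) (u : Traj n) (t : ℝ) : ℝ≥0∞ :=
  DD ε u t + P.G (u.u t) + ((κ : ℝ≥0∞) / ENNReal.ofReal ε) * Q.D (u.d t)

/-- The rescaled functional
`J_ε(u) = ∫₀^∞ e^{-t} [ ‖u''(t)‖²/(2ε²) + G(u(t)) + (κ/ε) D(u'(t)) ] dt`. -/
def Jfun (P : H1Data n W) (Q : H2Data n H) (κ : ℕ) (ε : ℝ) (u : Traj n) : ℝ≥0∞ :=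
  ∫⁻ t in Set.Ioi (0 : ℝ), ENNReal.ofReal (Real.exp (-t)) * LL P Q κ ε u t

/-- The functional
`F_ε(w) = ∫₀^∞ e^{-t/ε} [ (ε²/2)‖w''(t)‖² + G(w(t)) + κ ε D(w'(t)) ] dt`. -/
def Ffun (P : H1Data n W) (Q : H2Data n H) (κ : ℕ) (ε : ℝ) (u : Traj n) : ℝ≥0∞ :=
  ∫⁻ t in Set.Ioi (0 : ℝ), ENNReal.ofReal (Real.exp (-(t / ε))) *
    (ENNReal.ofReal (ε ^ 2 / 2 * ‖u.dd t‖ ^ 2) + P.G (u.u t) +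
      (κ : ℝ≥0∞) * ENNReal.ofReal ε * Q.D (u.d t))

/-- The non-dissipative functional `F_ε` (case `κ = 0`, `D ≡ 0`):
`F_ε(w) = ∫₀^∞ e^{-t/ε} [ (ε²/2)‖w''(t)‖² + G(w(t)) ] dt`. -/
def F0fun (P : H1Data n W) (ε : ℝ) (u : Traj n) : ℝ≥0∞ :=
  ∫⁻ t in Set.Ioi (0 : ℝ), ENNReal.ofReal (Real.exp (-(t / ε))) *
    (ENNReal.ofReal (ε ^ 2 / 2 * ‖u.dd t‖ ^ 2) + P.G (u.u t))

/-- `u` is a minimizer of `J_ε` subject to `u(0) = w₀`, `u'(0) = ε w₁`. -/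
def IsMinJ (P : H1Data n W) (Q : H2Data n H) (κ : ℕ) (ε : ℝ) (w₀ w₁ : L2Space n)
    (u : Traj n) : Prop :=
  u.u 0 = w₀ ∧ u.d 0 = ε • w₁ ∧
    ∀ v : Traj n, v.u 0 = w₀ → v.d 0 = ε • w₁ → Jfun P Q κ ε u ≤ Jfun P Q κ ε v

/-- `w` is a minimizer of `F_ε` subject to `w(0) = w₀`, `w'(0) = w₁`. -/
def IsMinF (P : H1Data n W) (Q : H2Data n H) (κ : ℕ) (ε : ℝ) (w₀ w₁ : L2Space n)
    (u : Traj n) : Prop :=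
  u.u 0 = w₀ ∧ u.d 0 = w₁ ∧
    ∀ v : Traj n, v.u 0 = w₀ → v.d 0 = w₁ → Ffun P Q κ ε u ≤ Ffun P Q κ ε v

/-- `w` is a minimizer of the non-dissipative `F_ε` subject to `w(0) = w₀`, `w'(0) = w₁`. -/
def IsMinF0 (P : H1Data n W) (ε : ℝ) (w₀ w₁ : L2Space n) (u : Traj n) : Prop :=
  u.u 0 = w₀ ∧ u.d 0 = w₁ ∧
    ∀ v : Traj n, v.u 0 = w₀ → v.d 0 = w₁ → F0fun P ε u ≤ F0fun P ε v

/-- The quantity `R(u_ε) = -ε ∫₀^∞ e^{-s} s ⟨∇G(u_ε(s)), w₁⟩ ds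
- κ ∫₀^∞ e^{-s} ⟨∇D(u_ε'(s)), w₁⟩ ds`. -/
def Rquant (P : H1Data n W) (Q : H2Data n H) (κ : ℕ) (ε : ℝ) (u : Traj n)
    (w₁ : W) (w₁H : H) : ℝ :=
  -ε * ∫ s in Set.Ioi (0 : ℝ), Real.exp (-s) * s * P.gradG (u.u s) w₁
    - (κ : ℝ) * ∫ s in Set.Ioi (0 : ℝ), Real.exp (-s) * Q.gradD (u.d s) w₁H

/-- The image of `x ∈ L²` in the dual `W'`, via `⟨x, h⟩ := ⟨x, ιh⟩_{L²}`. -/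
def toDualW (P : H1Data n W) (x : L2Space n) : W →L[ℝ] ℝ :=
  (innerSL ℝ x).comp P.ι

end Defs

/-- The averaging operator `(A f)(s) = ∫_s^∞ e^{-(t-s)} f(t) dt` on nonnegative functions. -/
def Aop (f : ℝ → ℝ≥0∞) (s : ℝ) : ℝ≥0∞ :=
  ∫⁻ t in Set.Ioi s, ENNReal.ofReal (Real.exp (-(t - s))) * f t

/-- The iterated averaging operator `(A² f)(s) = ∫_s^∞ e^{-(t-s)} (t-s) f(t) dt`. -/
def A2op (f : ℝ → ℝ≥0∞) (s : ℝ) : ℝ≥0∞ :=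
  ∫⁻ t in Set.Ioi s, ENNReal.ofReal ((t - s) * Real.exp (-(t - s))) * f t

/-- The averaging operator on signed functions. -/
def AopR (f : ℝ → ℝ) (s : ℝ) : ℝ :=
  ∫ t in Set.Ioi s, Real.exp (-(t - s)) * f t

/-- The iterated averaging operator on signed functions. -/
def A2opR (f : ℝ → ℝ) (s : ℝ) : ℝ :=
  ∫ t in Set.Ioi s, (t - s) * Real.exp (-(t - s)) * f t


/-- `v` is the weak limit of the sequence `w` in `H¹((0,T); L²)` for every `T > 0`
(equivalently, `w i → v` and `w i' → v'` weakly in `L²((0,T); L²)` for every `T > 0`). -/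
def WeakLimL2 {n : ℕ} (w : ℕ → Traj n) (v : Traj1 n) : Prop :=
  ∀ T > (0 : ℝ), ∀ g : ℝ → L2Space n, MemLp g 2 (volume.restrict (Set.Ioc (0 : ℝ) T)) →
    Tendsto (fun i => ∫ t in Set.Ioc (0 : ℝ) T, ⟪(w i).u t, g t⟫) atTop
      (nhds (∫ t in Set.Ioc (0 : ℝ) T, ⟪v.u t, g t⟫)) ∧
    Tendsto (fun i => ∫ t in Set.Ioc (0 : ℝ) T, ⟪(w i).d t, g t⟫) atTop
      (nhds (∫ t in Set.Ioc (0 : ℝ) T, ⟪v.d t, g t⟫))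

/-!
The path `t ↦ w₀ + ε (1 - e^{-t}) w₁` is an admissible competitor whose Lagrangian is bounded
uniformly in `ε ∈ (0,1)`: it stays on the segment `[w₀, w₀ + w₁]`, where `G` is bounded because
Gâteaux differentiability makes `δ ↦ G(w₀ + δ w₁)` continuous, and
`(κ/ε) D(ε e^{-t} w₁) ≤ κ D(w₁)`. Minimality of `u_ε` transfers the bound to
`∫ e^{-t} ‖u_ε''‖²/(2ε²)`. Since `u_ε'(t) = ε w₁ + ∫₀ᵗ u_ε''`, the kinetic bound then follows
from the weighted Hardy inequality `∫₀^∞ e^{-t} (∫₀ᵗ f)² dt ≤ 4 ∫₀^∞ e^{-t} f²`.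
-/

namespace ENNReal

theorem add_sq_le_two_mul (a b : ℝ≥0∞) : (a + b) ^ 2 ≤ 2 * (a ^ 2 + b ^ 2) := by
  rcases eq_or_ne a ⊤ with rfl | ha
  · simp
  rcases eq_or_ne b ⊤ with rfl | hb
  · simp
  lift a to ℝ≥0 using ha
  lift b to ℝ≥0 using hb
  exact_mod_cast (add_sq_le : (a + b) ^ 2 ≤ 2 * (a ^ 2 + b ^ 2))

theorem two_mul_le_add_sq (a b : ℝ≥0∞) : 2 * a * b ≤ a ^ 2 + b ^ 2 := by
  rcases eq_or_ne a ⊤ with rfl | ha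
  · rcases eq_or_ne b 0 with rfl | hb <;> simp [*]
  rcases eq_or_ne b ⊤ with rfl | hb
  · rcases eq_or_ne a 0 with rfl | ha' <;> simp [*]
  lift a to ℝ≥0 using ha
  lift b to ℝ≥0 using hb
  exact_mod_cast _root_.two_mul_le_add_sq a b

end ENNReal

theorem lintegral_Ioi_exp_neg (s : ℝ) :
    ∫⁻ t in Ioi s, ENNReal.ofReal (Real.exp (-t)) = ENNReal.ofReal (Real.exp (-s)) := by
  rw [← ofReal_integral_eq_lintegral_ofReal _ (.of_forall fun t => (Real.exp_pos _).le),
    integral_exp_neg_Ioi]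
  simpa [IntegrableOn] using exp_neg_integrableOn_Ioi s one_pos

theorem iUnion_Ioc_zero_add_one : ⋃ m : ℕ, Ioc (0 : ℝ) (m + 1) = Ioi 0 :=
  iUnion_Ioc_eq_Ioi_self_iff.2 fun x _ => ⟨⌈x⌉₊, (Nat.le_ceil x).trans (by linarith)⟩

theorem setLIntegral_Ioc_mul_setLIntegral_Ioc_swap {g h : ℝ → ℝ≥0∞} (hg : Measurable g)
    (hh : Measurable h) (a b : ℝ) :
    ∫⁻ t in Ioc a b, g t * ∫⁻ s in Ioc a t, h s =
      ∫⁻ s in Ioc a b, h s * ∫⁻ t in Icc s b, g t := by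
  let F : ℝ → ℝ → ℝ≥0∞ := fun t s => if s ≤ t then g t * h s else 0
  have hF : Measurable (Function.uncurry F) :=
    Measurable.ite (measurableSet_le measurable_snd measurable_fst)
      ((hg.comp measurable_fst).mul (hh.comp measurable_snd)) measurable_const
  have hleft : ∀ t ∈ Ioc a b, g t * ∫⁻ s in Ioc a t, h s = ∫⁻ s in Ioc a b, F t s := by
    intro t ht
    have : (fun s => F t s) = (Iic t).indicator fun s => g t * h s := by
      ext s; simp [F, indicator]
    rw [this, setLIntegral_indicator measurableSet_Iic, inter_comm, Ioc_inter_Iic,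
      inf_eq_right.2 ht.2, lintegral_const_mul _ hh]
  have hright : ∀ s ∈ Ioc a b, ∫⁻ t in Ioc a b, F t s = h s * ∫⁻ t in Icc s b, g t := by
    intro s hs
    have : (fun t => F t s) = (Ici s).indicator fun t => g t * h s := by
      ext t; simp [F, indicator]
    have hset : Ici s ∩ Ioc a b = Icc s b := by
      ext t
      simp only [mem_inter_iff, mem_Ici, mem_Ioc, mem_Icc]
      exact ⟨fun h => ⟨h.1, h.2.2⟩, fun h => ⟨h.1, hs.1.trans_le h.1, h.2⟩⟩
    rw [this, setLIntegral_indicator measurableSet_Ici, hset, lintegral_mul_const _ hg, mul_comm]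
  calc ∫⁻ t in Ioc a b, g t * ∫⁻ s in Ioc a t, h s
      = ∫⁻ t in Ioc a b, ∫⁻ s in Ioc a b, F t s := setLIntegral_congr_fun measurableSet_Ioc hleft
    _ = ∫⁻ s in Ioc a b, ∫⁻ t in Ioc a b, F t s := lintegral_lintegral_swap hF.aemeasurable
    _ = _ := setLIntegral_congr_fun measurableSet_Ioc hright

theorem sq_setLIntegral_Ioc_le {f : ℝ → ℝ≥0∞} (hf : Measurable f) (a t : ℝ) :
    (∫⁻ s in Ioc a t, f s) ^ 2 ≤ 2 * ∫⁻ s in Ioc a t, f s * ∫⁻ r in Ioc a s, f r := by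
  set Φ : ℝ → ℝ≥0∞ := fun x => ∫⁻ s in Ioc a x, f s
  have hΦ : Measurable Φ :=
    Monotone.measurable fun x y hxy => lintegral_mono_set (Ioc_subset_Ioc_right hxy)
  have hsplit : ∀ s ∈ Ioc a t, f s * Φ t = f s * Φ s + f s * ∫⁻ r in Ioc s t, f r := by
    intro s hs
    rw [← mul_add, ← lintegral_union measurableSet_Ioc (Ioc_disjoint_Ioc_of_le le_rfl),
      Ioc_union_Ioc_eq_Ioc hs.1.le hs.2]
  calc Φ t ^ 2 = ∫⁻ s in Ioc a t, f s * Φ t := by rw [lintegral_mul_const _ hf, sq]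
    _ = ∫⁻ s in Ioc a t, (f s * Φ s + f s * ∫⁻ r in Ioc s t, f r) :=
      setLIntegral_congr_fun measurableSet_Ioc hsplit
    _ ≤ ∫⁻ s in Ioc a t, (f s * Φ s + f s * ∫⁻ r in Icc s t, f r) := by
      refine lintegral_mono fun s => ?_
      gcongr f s * Φ s + f s * ?_
      exact lintegral_mono_set Ioc_subset_Icc_self
    _ = 2 * ∫⁻ s in Ioc a t, f s * Φ s := by
      rw [lintegral_add_left (f := fun s => f s * Φ s) (hf.mul hΦ),
        ← setLIntegral_Ioc_mul_setLIntegral_Ioc_swap hf hf,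
        two_mul]

theorem setLIntegral_Ioc_exp_neg_mul_setLIntegral_le {k : ℝ → ℝ≥0∞} (hk : Measurable k)
    (a b : ℝ) :
    ∫⁻ t in Ioc a b, ENNReal.ofReal (Real.exp (-t)) * ∫⁻ s in Ioc a t, k s ≤
      ∫⁻ s in Ioc a b, k s * ENNReal.ofReal (Real.exp (-s)) := by
  rw [setLIntegral_Ioc_mul_setLIntegral_Ioc_swap (by fun_prop) hk]
  gcongr with s
  calc ∫⁻ t in Icc s b, ENNReal.ofReal (Real.exp (-t))
      ≤ ∫⁻ t in Ici s, ENNReal.ofReal (Real.exp (-t)) := lintegral_mono_set Icc_subset_Ici_self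
    _ = ENNReal.ofReal (Real.exp (-s)) := by
      rw [← setLIntegral_congr Ioi_ae_eq_Ici, lintegral_Ioi_exp_neg]

theorem setLIntegral_Ioc_exp_neg_mul_sq_setLIntegral_le {f : ℝ → ℝ≥0∞} (hf : Measurable f)
    {a b : ℝ} (hfin : ∫⁻ s in Ioc a b, f s ≠ ⊤) :
    ∫⁻ t in Ioc a b, ENNReal.ofReal (Real.exp (-t)) * (∫⁻ s in Ioc a t, f s) ^ 2 ≤
      4 * ∫⁻ t in Ioc a b, ENNReal.ofReal (Real.exp (-t)) * f t ^ 2 := by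
  set E : ℝ → ℝ≥0∞ := fun t => ENNReal.ofReal (Real.exp (-t))
  set Φ : ℝ → ℝ≥0∞ := fun x => ∫⁻ s in Ioc a x, f s
  have hΦ : Measurable Φ :=
    Monotone.measurable fun x y hxy => lintegral_mono_set (Ioc_subset_Ioc_right hxy)
  set L := ∫⁻ t in Ioc a b, E t * Φ t ^ 2
  have hL : L ≠ ⊤ := by
    refine ne_top_of_le_ne_top (b := (∫⁻ t in Ioc a b, E t) * Φ b ^ 2) ?_ ?_
    · refine mul_ne_top (ne_top_of_le_ne_top (ofReal_ne_top (r := Real.exp (-a))) ?_)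
        (pow_ne_top hfin)
      exact (lintegral_mono_set Ioc_subset_Ioi_self).trans (lintegral_Ioi_exp_neg a).le
    · rw [← lintegral_mul_const _ (by fun_prop)]
      refine setLIntegral_mono' measurableSet_Ioc fun t ht => ?_
      gcongr
      exact lintegral_mono_set (Ioc_subset_Ioc_right ht.2)
  show L ≤ 4 * ∫⁻ t in Ioc a b, E t * f t ^ 2
  -- `L` is finite, so it suffices to bound `2 L` by `4 ∫ E f² + L`: use `Φ² ≤ 2 ∫ f Φ`,
  -- Fubini and AM-GM.
  refine ENNReal.le_of_add_le_add_right hL ?_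
  calc L + L = 2 * ∫⁻ t in Ioc a b, E t * Φ t ^ 2 := (two_mul L).symm
    _ ≤ 2 * ∫⁻ t in Ioc a b, E t * (2 * ∫⁻ s in Ioc a t, f s * Φ s) := by
      gcongr with t
      exact sq_setLIntegral_Ioc_le hf a t
    _ = 4 * ∫⁻ t in Ioc a b, E t * ∫⁻ s in Ioc a t, f s * Φ s := by
      simp_rw [mul_left_comm (E _) 2]
      rw [lintegral_const_mul' _ _ ofNat_ne_top, ← mul_assoc]
      norm_num
    _ ≤ 4 * ∫⁻ s in Ioc a b, f s * Φ s * E s := by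
      gcongr 4 * ?_
      exact setLIntegral_Ioc_exp_neg_mul_setLIntegral_le (hf.mul hΦ) a b
    _ = ∫⁻ s in Ioc a b, E s * (2 * (2 * f s) * Φ s) := by
      rw [← lintegral_const_mul' _ _ ofNat_ne_top]
      congr 1 with s
      ring
    _ ≤ ∫⁻ s in Ioc a b, E s * ((2 * f s) ^ 2 + Φ s ^ 2) := by
      gcongr with s
      exact ENNReal.two_mul_le_add_sq _ _
    _ = 4 * (∫⁻ t in Ioc a b, E t * f t ^ 2) + L := by
      have : ∀ s, E s * ((2 * f s) ^ 2 + Φ s ^ 2) = 4 * (E s * f s ^ 2) + E s * Φ s ^ 2 :=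
        fun s => by ring
      simp_rw [this]
      rw [lintegral_add_left (by fun_prop), lintegral_const_mul' _ _ ofNat_ne_top]

theorem lintegral_Ioi_exp_neg_mul_sq_setLIntegral_le_of_measurable {f : ℝ → ℝ≥0∞}
    (hf : Measurable f) (hfin : ∀ T > 0, ∫⁻ s in Ioc 0 T, f s ≠ ⊤) :
    ∫⁻ t in Ioi 0, ENNReal.ofReal (Real.exp (-t)) * (∫⁻ s in Ioc 0 t, f s) ^ 2 ≤
      4 * ∫⁻ t in Ioi 0, ENNReal.ofReal (Real.exp (-t)) * f t ^ 2 := by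
  have hdir : Directed (· ⊆ ·) fun m : ℕ => Ioc (0 : ℝ) (m + 1) :=
    Monotone.directed_le fun i j hij => Ioc_subset_Ioc_right (by gcongr)
  rw [← iUnion_Ioc_zero_add_one, setLIntegral_iUnion_of_directed _ hdir]
  refine iSup_le fun m =>
    (setLIntegral_Ioc_exp_neg_mul_sq_setLIntegral_le hf (hfin _ (by positivity))).trans ?_
  gcongr
  exact subset_iUnion (fun m : ℕ => Ioc (0 : ℝ) (m + 1)) m

theorem lintegral_Ioi_exp_neg_mul_sq_setLIntegral_le {f : ℝ → ℝ≥0∞}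
    (hf : AEMeasurable f (volume.restrict (Ioi 0)))
    (hfin : ∀ T > 0, ∫⁻ s in Ioc 0 T, f s ≠ ⊤) :
    ∫⁻ t in Ioi 0, ENNReal.ofReal (Real.exp (-t)) * (∫⁻ s in Ioc 0 t, f s) ^ 2 ≤
      4 * ∫⁻ t in Ioi 0, ENNReal.ofReal (Real.exp (-t)) * f t ^ 2 := by
  have hIoc : ∀ T, ∫⁻ s in Ioc 0 T, f s = ∫⁻ s in Ioc 0 T, hf.mk f s := fun T =>
    lintegral_congr_ae (ae_restrict_of_ae_restrict_of_subset Ioc_subset_Ioi_self hf.ae_eq_mk)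
  have hsq : ∫⁻ t in Ioi 0, ENNReal.ofReal (Real.exp (-t)) * f t ^ 2 =
      ∫⁻ t in Ioi 0, ENNReal.ofReal (Real.exp (-t)) * hf.mk f t ^ 2 :=
    lintegral_congr_ae (hf.ae_eq_mk.mono fun t ht => by simp only [ht])
  simp_rw [hIoc, hsq]
  exact lintegral_Ioi_exp_neg_mul_sq_setLIntegral_le_of_measurable hf.measurable_mk
    fun T hT => hIoc T ▸ hfin T hT

theorem ofReal_sq_norm_div_two_mul_sq {E : Type*} [SeminormedAddCommGroup E] (x : E) {ε : ℝ}
    (hε : ε ≠ 0) :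
    ENNReal.ofReal (‖x‖ ^ 2 / (2 * ε ^ 2)) = (2 * ‖ε‖ₑ ^ 2)⁻¹ * ‖x‖ₑ ^ 2 := by
  rw [ENNReal.ofReal_div_of_pos (by positivity), ENNReal.div_eq_inv_mul,
    ENNReal.ofReal_mul zero_le_two, ← sq_abs ε, ENNReal.ofReal_pow (abs_nonneg ε),
    ENNReal.ofReal_pow (norm_nonneg x), ofReal_norm, ← Real.enorm_eq_ofReal_abs,
    ENNReal.ofReal_ofNat]

namespace Traj

theorem enorm_d_le (u : Traj n) {t : ℝ} (ht : 0 ≤ t) :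
    ‖u.d t‖ₑ ≤ ‖u.d 0‖ₑ + ∫⁻ s in Ioc 0 t, ‖u.dd s‖ₑ := by
  rw [u.hd t ht, intervalIntegral.integral_of_le ht]
  exact (enorm_add_le _ _).trans (add_le_add le_rfl (enorm_integral_le_lintegral_enorm _))

theorem aestronglyMeasurable_dd (u : Traj n) :
    AEStronglyMeasurable u.dd (volume.restrict (Ioi 0)) := by
  rw [← iUnion_Ioc_zero_add_one, aestronglyMeasurable_iUnion_iff]
  exact fun m => (u.memL2 _ (by positivity)).aestronglyMeasurable

theorem setLIntegral_enorm_dd_ne_top (u : Traj n) {T : ℝ} (hT : 0 < T) :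
    ∫⁻ s in Ioc 0 T, ‖u.dd s‖ₑ ≠ ⊤ :=
  ((intervalIntegrable_iff_integrableOn_Ioc_of_le hT.le).1 (u.int_dd T hT)).2.ne

theorem lintegral_exp_neg_mul_enorm_d_sq_le (u : Traj n) :
    ∫⁻ t in Ioi 0, ENNReal.ofReal (Real.exp (-t)) * ‖u.d t‖ₑ ^ 2 ≤
      2 * ‖u.d 0‖ₑ ^ 2 + 8 * ∫⁻ t in Ioi 0, ENNReal.ofReal (Real.exp (-t)) * ‖u.dd t‖ₑ ^ 2 := by
  calc ∫⁻ t in Ioi 0, ENNReal.ofReal (Real.exp (-t)) * ‖u.d t‖ₑ ^ 2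
      ≤ ∫⁻ t in Ioi 0, ENNReal.ofReal (Real.exp (-t)) *
          (2 * ‖u.d 0‖ₑ ^ 2 + 2 * (∫⁻ s in Ioc 0 t, ‖u.dd s‖ₑ) ^ 2) := by
        refine setLIntegral_mono' measurableSet_Ioi fun t ht => ?_
        gcongr
        rw [← mul_add]
        exact (pow_le_pow_left' (u.enorm_d_le (le_of_lt ht)) 2).trans (add_sq_le_two_mul _ _)
    _ = 2 * ‖u.d 0‖ₑ ^ 2 + 2 * ∫⁻ t in Ioi 0,
          ENNReal.ofReal (Real.exp (-t)) * (∫⁻ s in Ioc 0 t, ‖u.dd s‖ₑ) ^ 2 := by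
        simp_rw [mul_add]
        rw [lintegral_add_left (by fun_prop), lintegral_mul_const _ (by fun_prop),
          lintegral_Ioi_exp_neg, ← lintegral_const_mul' _ _ ofNat_ne_top]
        simp only [neg_zero, Real.exp_zero, ofReal_one, one_mul]
        congr 2 with t
        ring
    _ ≤ 2 * ‖u.d 0‖ₑ ^ 2 +
          2 * (4 * ∫⁻ t in Ioi 0, ENNReal.ofReal (Real.exp (-t)) * ‖u.dd t‖ₑ ^ 2) := by
        gcongr
        exact lintegral_Ioi_exp_neg_mul_sq_setLIntegral_le u.aestronglyMeasurable_dd.enorm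
          fun T hT => u.setLIntegral_enorm_dd_ne_top hT
    _ = _ := by ring

theorem lintegral_exp_neg_mul_KK_le (u : Traj n) {ε : ℝ} (hε : ε ≠ 0) {w : L2Space n}
    (hw : u.d 0 = ε • w) :
    ∫⁻ t in Ioi 0, ENNReal.ofReal (Real.exp (-t)) * ENNReal.ofReal (KK ε u t) ≤
      ‖w‖ₑ ^ 2 + 8 * ∫⁻ t in Ioi 0, ENNReal.ofReal (Real.exp (-t)) * DD ε u t := by
  simp only [KK, DD, ofReal_sq_norm_div_two_mul_sq _ hε]
  set c : ℝ≥0∞ := 2 * ‖ε‖ₑ ^ 2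
  have hc0 : c ≠ 0 := by simp [c, hε]
  have hctop : c ≠ ⊤ := mul_ne_top ofNat_ne_top (pow_ne_top enorm_ne_top)
  simp_rw [mul_left_comm (ENNReal.ofReal _) c⁻¹]
  rw [lintegral_const_mul' _ _ (inv_ne_top.2 hc0), lintegral_const_mul' _ _ (inv_ne_top.2 hc0)]
  calc c⁻¹ * ∫⁻ t in Ioi 0, ENNReal.ofReal (Real.exp (-t)) * ‖u.d t‖ₑ ^ 2
      ≤ c⁻¹ * (c * ‖w‖ₑ ^ 2 +
          8 * ∫⁻ t in Ioi 0, ENNReal.ofReal (Real.exp (-t)) * ‖u.dd t‖ₑ ^ 2) := by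
        gcongr
        refine u.lintegral_exp_neg_mul_enorm_d_sq_le.trans_eq ?_
        rw [hw, enorm_smul, mul_pow, ← mul_assoc]
    _ = _ := by rw [mul_add, ← mul_assoc, ENNReal.inv_mul_cancel hc0 hctop, one_mul,
          mul_left_comm]

def expApproach (a b : L2Space n) : Traj n where
  u t := a + (1 - Real.exp (-t)) • b
  d t := Real.exp (-t) • b
  dd t := (-Real.exp (-t)) • b
  memL2 T _ := by
    refine MemLp.of_bound (by fun_prop) ‖b‖ ?_
    filter_upwards [self_mem_ae_restrict measurableSet_Ioc] with t ht
    rw [norm_smul, norm_neg, Real.norm_of_nonneg (Real.exp_pos _).le]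
    exact mul_le_of_le_one_left (norm_nonneg b) (Real.exp_le_one_iff.2 (by linarith [ht.1]))
  int_dd T _ := (by fun_prop : Continuous fun t : ℝ => (-Real.exp (-t)) • b).intervalIntegrable _ _
  int_d T _ := (by fun_prop : Continuous fun t : ℝ => Real.exp (-t) • b).intervalIntegrable _ _
  hd t _ := by
    rw [intervalIntegral.integral_smul_const, ← add_smul]
    simp
  hu t _ := by
    rw [intervalIntegral.integral_smul_const]
    simp

end Traj

section Functionals

variable {W H : Type*} [NormedAddCommGroup W] [NormedSpace ℝ W] [CompleteSpace W]
  [NormedAddCommGroup H] [NormedSpace ℝ H] [CompleteSpace H]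

theorem H1Data.continuous_G_line (P : H1Data n W) (v h : W) :
    Continuous fun δ : ℝ => (P.G (P.ι (v + δ • h))).toReal := by
  refine continuous_iff_continuousAt.2 fun δ₀ => ?_
  have h0 := (P.hgrad (v + δ₀ • h) h).continuousAt.comp_of_eq
    (f := fun δ : ℝ => δ - δ₀) (by fun_prop) (sub_self δ₀)
  refine h0.congr (.of_forall fun δ => ?_)
  simp only [Function.comp_apply]
  rw [sub_smul, add_assoc, add_sub_cancel]

theorem H1Data.exists_G_le_on_segment (P : H1Data n W) (v h : W) :
    ∃ M : ℝ, ∀ δ ∈ Icc (0 : ℝ) 1, P.G (P.ι (v + δ • h)) ≤ ENNReal.ofReal M := by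
  obtain ⟨M, hM⟩ :=
    isCompact_Icc.exists_bound_of_continuousOn (P.continuous_G_line v h).continuousOn
  refine ⟨M, fun δ hδ => ?_⟩
  rw [← ENNReal.ofReal_toReal ((P.domain _).2 ⟨_, rfl⟩).ne]
  exact ENNReal.ofReal_le_ofReal ((Real.le_norm_self _).trans (hM δ hδ))

theorem H2Data.D_smul (Q : H2Data n H) {x : L2Space n} (hx : x ∈ range Q.ιH) (c : ℝ) :
    Q.D (c • x) = ENNReal.ofReal (c ^ 2) * Q.D x := by
  obtain ⟨h, rfl⟩ := hx
  rw [← map_smul, Q.D_eq, Q.D_eq, ← ENNReal.ofReal_mul (sq_nonneg c),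
    ContinuousLinearMap.map_smul₂, map_smul, smul_eq_mul, smul_eq_mul]
  ring_nf

theorem LL_expApproach_le (P : H1Data n W) (Q : H2Data n H) {κ : ℕ} {ε : ℝ} (hε₀ : 0 < ε)
    (hε₁ : ε ≤ 1) {w₀ w₁ : W} {M : ℝ}
    (hM : ∀ δ ∈ Icc (0 : ℝ) 1, P.G (P.ι (w₀ + δ • w₁)) ≤ ENNReal.ofReal M)
    (hD : κ ≠ 0 → P.ι w₁ ∈ range Q.ιH) {t : ℝ} (ht : 0 ≤ t) :
    LL P Q κ ε (Traj.expApproach (P.ι w₀) (ε • P.ι w₁)) t ≤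
      ENNReal.ofReal (‖P.ι w₁‖ ^ 2 / 2) + ENNReal.ofReal M + κ * Q.D (P.ι w₁) := by
  have he₀ : 0 < Real.exp (-t) := Real.exp_pos _
  have he₁ : Real.exp (-t) ≤ 1 := Real.exp_le_one_iff.2 (neg_nonpos.2 ht)
  unfold LL
  gcongr ?_ + ?_ + ?_
  · simp only [DD, Traj.expApproach, smul_smul]
    refine ENNReal.ofReal_le_ofReal ?_
    rw [norm_smul, mul_pow, Real.norm_eq_abs, sq_abs,
      show (-Real.exp (-t) * ε) ^ 2 * ‖P.ι w₁‖ ^ 2 / (2 * ε ^ 2) =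
        Real.exp (-t) ^ 2 * (‖P.ι w₁‖ ^ 2 / 2) by field_simp]
    exact mul_le_of_le_one_left (by positivity) (pow_le_one₀ he₀.le he₁)
  · simp only [Traj.expApproach, smul_smul]
    rw [← map_smul, ← map_add]
    exact hM _ ⟨by nlinarith, mul_le_one₀ (by linarith) hε₀.le hε₁⟩
  · rcases eq_or_ne κ 0 with rfl | hκ
    · simp
    simp only [Traj.expApproach, smul_smul]
    rw [Q.D_smul (hD hκ), ← mul_assoc]
    gcongr
    calc (κ : ℝ≥0∞) / ENNReal.ofReal ε * ENNReal.ofReal ((Real.exp (-t) * ε) ^ 2)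
        = κ * (ENNReal.ofReal ((Real.exp (-t) * ε) ^ 2) / ENNReal.ofReal ε) := by
          rw [ENNReal.div_eq_inv_mul, ENNReal.div_eq_inv_mul]
          ring
      _ ≤ κ * 1 := by
          gcongr
          refine ENNReal.div_le_of_le_mul (ENNReal.ofReal_le_ofReal ?_ |>.trans_eq (one_mul _).symm)
          have hx : Real.exp (-t) * ε ≤ ε := mul_le_of_le_one_left hε₀.le he₁
          nlinarith [mul_pos he₀ hε₀]
      _ = κ := mul_one _

theorem Jfun_le_of_LL_le (P : H1Data n W) (Q : H2Data n H) {κ : ℕ} {ε : ℝ} {v : Traj n}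
    {c : ℝ≥0∞} (h : ∀ t > 0, LL P Q κ ε v t ≤ c) : Jfun P Q κ ε v ≤ c :=
  calc Jfun P Q κ ε v ≤ ∫⁻ t in Ioi 0, ENNReal.ofReal (Real.exp (-t)) * c :=
        setLIntegral_mono' measurableSet_Ioi fun t ht => by gcongr; exact h t ht
    _ = c := by
        rw [lintegral_mul_const _ (by fun_prop), lintegral_Ioi_exp_neg]
        simp

theorem lintegral_exp_neg_mul_DD_le_Jfun (P : H1Data n W) (Q : H2Data n H) (κ : ℕ) (ε : ℝ)
    (u : Traj n) :
    ∫⁻ t in Ioi 0, ENNReal.ofReal (Real.exp (-t)) * DD ε u t ≤ Jfun P Q κ ε u :=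
  lintegral_mono fun t => by
    unfold LL
    gcongr _ * ?_
    exact le_self_add.trans le_self_add

end Functionals

theorem statement_1_general {n : ℕ} {W H : Type*}
    [NormedAddCommGroup W] [NormedSpace ℝ W] [CompleteSpace W]
    [NormedAddCommGroup H] [NormedSpace ℝ H] [CompleteSpace H]
    (P : H1Data n W) (Q : H2Data n H) (κ : ℕ) (hκ : κ = 0 ∨ κ = 1)
    (w₀ w₁ : W) (hw₁H : κ = 1 → P.ι w₁ ∈ Set.range Q.ιH) :
    ∃ C : ℝ, 0 ≤ C ∧ ∀ ε ∈ Set.Ioo (0 : ℝ) 1, ∀ u : Traj n,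
      IsMinJ P Q κ ε (P.ι w₀) (P.ι w₁) u →
      (∫⁻ t in Set.Ioi (0 : ℝ), ENNReal.ofReal (Real.exp (-t)) * DD ε u t) ≤
        ENNReal.ofReal C ∧
      (∫⁻ t in Set.Ioi (0 : ℝ),
          ENNReal.ofReal (Real.exp (-t)) * ENNReal.ofReal (KK ε u t)) ≤
        ENNReal.ofReal C := by
  obtain ⟨M, hM⟩ := P.exists_G_le_on_segment w₀ w₁
  have hD : κ ≠ 0 → P.ι w₁ ∈ range Q.ιH := fun h => hw₁H (hκ.resolve_left h)
  set E : ℝ≥0∞ := ENNReal.ofReal (‖P.ι w₁‖ ^ 2 / 2) + ENNReal.ofReal M + κ * Q.D (P.ι w₁)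
  have hE : E ≠ ⊤ := by
    refine add_ne_top.2 ⟨add_ne_top.2 ⟨ofReal_ne_top, ofReal_ne_top⟩, ?_⟩
    rcases eq_or_ne κ 0 with h | h
    · simp [h]
    · exact mul_ne_top (natCast_ne_top κ) ((Q.domainH _).2 (hD h)).ne
  refine ⟨(‖P.ι w₁‖ₑ ^ 2 + 8 * E).toReal, toReal_nonneg, fun ε hε u ⟨_, hd₀, hmin⟩ => ?_⟩
  have hDD : ∫⁻ t in Ioi 0, ENNReal.ofReal (Real.exp (-t)) * DD ε u t ≤ E :=
    (lintegral_exp_neg_mul_DD_le_Jfun P Q κ ε u).trans <|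
      (hmin _ (by simp [Traj.expApproach]) (by simp [Traj.expApproach])).trans <|
        Jfun_le_of_LL_le P Q fun t ht => LL_expApproach_le P Q hε.1 hε.2.le hM hD ht.le
  rw [ofReal_toReal (add_ne_top.2 ⟨pow_ne_top enorm_ne_top, mul_ne_top ofNat_ne_top hE⟩)]
  refine ⟨hDD.trans (le_add_left (le_mul_of_one_le_left' (by norm_num))), ?_⟩
  exact (u.lintegral_exp_neg_mul_KK_le hε.1.ne' hd₀).trans (by gcongr)

/-- Lemma 3.3: basic estimates on minimizers of `J_ε`. -/
theorem statement_1 {n : ℕ} {W H : Type*}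
    [NormedAddCommGroup W] [NormedSpace ℝ W] [CompleteSpace W]
    [NormedAddCommGroup H] [NormedSpace ℝ H] [CompleteSpace H]
    (P : H1Data n W) (Q : H2Data n H) (κ : ℕ) (hκ : κ = 0 ∨ κ = 1)
    (hD0 : κ = 0 → ∀ x : L2Space n, Q.D x = 0)
    (w₀ w₁ : W) (hw₁H : κ = 1 → P.ι w₁ ∈ Set.range Q.ιH) :
    ∃ C : ℝ, 0 ≤ C ∧ ∀ ε ∈ Set.Ioo (0 : ℝ) 1, ∀ u : Traj n,
      IsMinJ P Q κ ε (P.ι w₀) (P.ι w₁) u →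
      (∫⁻ t in Set.Ioi (0 : ℝ), ENNReal.ofReal (Real.exp (-t)) * DD ε u t) ≤
        ENNReal.ofReal C ∧
      (∫⁻ t in Set.Ioi (0 : ℝ),
          ENNReal.ofReal (Real.exp (-t)) * ENNReal.ofReal (KK ε u t)) ≤
        ENNReal.ofReal C :=
  statement_1_general P Q κ hκ w₀ w₁ hw₁H
end
end

section
/- Let l, m : [0,∞) → [0,∞) be nonnegative locally integrable functions such that (A²l)(t) ≤ m(t) for almost every t > 0. Then for every a > 0, every δ ∈ (0,1), and every T ≥ 0, one has (∫₀^{δa} s e^{-s} ds) · ∫_{T+δa}^{T+a} l(t) dt ≤ ∫_T^{T+a} m(t) dt. -/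
/-! Truncate the kernel `u e^{-u}` of `A²` to `(0, r)` and convolve it with `l` restricted to
`(p, b]`. By Tonelli and translation invariance the integral over `t` of this convolution is
`(∫₀^r u e^{-u} du) · ∫_p^b l`; pointwise it is dominated by `A²l(t)`, and it vanishes unless
`t ∈ (p - r, b]`. Take `p = T + δa`, `b = T + a`, `r = δa`. -/

open MeasureTheory ENNReal Filter Set
open scoped RealInnerProductSpace NNReal

noncomputable section

variable {n : ℕ}

lemma lintegral_lintegral_sub_mul {k g : ℝ → ℝ≥0∞} (hk : Measurable k) (hg : AEMeasurable g) :
    ∫⁻ t, ∫⁻ s, k (s - t) * g s = (∫⁻ u, k u) * ∫⁻ s, g s := by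
  have hprod : AEMeasurable (Function.uncurry fun t s => k (s - t) * g s)
      ((volume : Measure ℝ).prod volume) :=
    (hk.comp (measurable_snd.sub measurable_fst)).aemeasurable.mul hg.comp_snd
  rw [lintegral_lintegral_swap hprod, ← lintegral_const_mul'' _ hg]
  congr 1 with s
  rw [lintegral_mul_const (f := fun t => k (s - t)) _ (hk.comp (measurable_const_sub s)),
    (Measure.measurePreserving_sub_left volume s).lintegral_comp hk]

lemma lintegral_indicator_Ioo_mul_exp {r : ℝ} (hr : 0 ≤ r) :
    ∫⁻ u, (Ioo 0 r).indicator (fun u => ENNReal.ofReal (u * Real.exp (-u))) u =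
      ENNReal.ofReal (∫ u in (0 : ℝ)..r, u * Real.exp (-u)) := by
  rw [lintegral_indicator measurableSet_Ioo, Measure.restrict_congr_set Ioo_ae_eq_Ioc,
    intervalIntegral.integral_of_le hr, ofReal_integral_eq_lintegral_ofReal
      (by fun_prop : Continuous fun u : ℝ => u * Real.exp (-u)).integrableOn_Ioc]
  filter_upwards [ae_restrict_mem measurableSet_Ioc] with u hu
  exact mul_nonneg hu.1.le (Real.exp_nonneg _)

lemma lintegral_indicator_Ioo_mul_le_A2op (r t : ℝ) (f : ℝ → ℝ≥0∞) :
    ∫⁻ s, (Ioo 0 r).indicator (fun u => ENNReal.ofReal (u * Real.exp (-u))) (s - t) * f s ≤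
      A2op f t := by
  rw [A2op, ← lintegral_indicator measurableSet_Ioi]
  refine lintegral_mono fun s => ?_
  by_cases hs : s - t ∈ Ioo 0 r
  · rw [indicator_of_mem hs, indicator_of_mem (show s ∈ Ioi t from sub_pos.mp hs.1)]
  · rw [indicator_of_notMem hs, zero_mul]
    exact zero_le

lemma A2op_mono : Monotone A2op :=
  fun _ _ hfg t => lintegral_mono fun s => by gcongr; exact hfg s

lemma lintegral_Ioc_le_lintegral_A2op {f : ℝ → ℝ≥0∞} {p b r : ℝ} (hr : 0 ≤ r)
    (hf : AEMeasurable f (volume.restrict (Ioc p b))) :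
    ENNReal.ofReal (∫ u in (0 : ℝ)..r, u * Real.exp (-u)) * ∫⁻ s in Ioc p b, f s ≤
      ∫⁻ t in Ioc (p - r) b, A2op f t := by
  set k := (Ioo 0 r).indicator (fun u => ENNReal.ofReal (u * Real.exp (-u))) with hk_def
  set g := (Ioc p b).indicator f with hg_def
  have hk : Measurable k := (by fun_prop : Measurable fun u : ℝ =>
    ENNReal.ofReal (u * Real.exp (-u))).indicator measurableSet_Ioo
  have hg : AEMeasurable g := (aemeasurable_indicator_iff measurableSet_Ioc).2 hf
  have hsupp : (fun t => ∫⁻ s, k (s - t) * g s).support ⊆ Ioc (p - r) b := by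
    intro t ht
    by_contra hto
    refine ht ((lintegral_congr fun s => ?_).trans lintegral_zero)
    simp only [hk_def, hg_def, indicator_apply, mul_ite, ite_mul, zero_mul, mul_zero]
    split_ifs with hs hst
    · exact absurd ⟨by linarith [hs.1, hst.2], by linarith [hs.2, hst.1]⟩ hto
    all_goals rfl
  calc ENNReal.ofReal (∫ u in (0 : ℝ)..r, u * Real.exp (-u)) * ∫⁻ s in Ioc p b, f s
      = (∫⁻ u, k u) * ∫⁻ s, g s := by
        rw [lintegral_indicator_Ioo_mul_exp hr, lintegral_indicator measurableSet_Ioc]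
    _ = ∫⁻ t in Ioc (p - r) b, ∫⁻ s, k (s - t) * g s := by
        rw [setLIntegral_eq_of_support_subset hsupp, lintegral_lintegral_sub_mul hk hg]
    _ ≤ ∫⁻ t in Ioc (p - r) b, A2op f t := lintegral_mono fun t =>
        (lintegral_indicator_Ioo_mul_le_A2op r t g).trans
          (A2op_mono (indicator_le_self _ _) t)

/-- Lemma 6.2, the key averaging lemma. -/
theorem statement_16 (l m : ℝ → ℝ) (hl : ∀ t, 0 ≤ l t) (hm : ∀ t, 0 ≤ m t)
    (hlloc : ∀ T > (0 : ℝ), MeasureTheory.IntegrableOn l (Set.Icc 0 T) volume)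
    (hmloc : ∀ T > (0 : ℝ), MeasureTheory.IntegrableOn m (Set.Icc 0 T) volume)
    (hyp : ∀ᵐ t ∂(volume.restrict (Set.Ioi (0 : ℝ))),
      A2op (fun s => ENNReal.ofReal (l s)) t ≤ ENNReal.ofReal (m t)) :
    ∀ a > (0 : ℝ), ∀ δ ∈ Set.Ioo (0 : ℝ) 1, ∀ T ≥ (0 : ℝ),
      (∫ s in (0 : ℝ)..(δ * a), s * Real.exp (-s)) *
          ∫ t in (T + δ * a)..(T + a), l t ≤
        ∫ t in T..(T + a), m t := by
  intro a ha δ ⟨hδ0, hδ1⟩ T hT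
  have hδa : 0 < δ * a := mul_pos hδ0 ha
  have hl_int : IntegrableOn l (Ioc (T + δ * a) (T + a)) :=
    (hlloc (T + a) (by linarith)).mono_set fun x hx => ⟨by linarith [hx.1], hx.2⟩
  have hm_int : IntegrableOn m (Ioc T (T + a)) :=
    (hmloc (T + a) (by linarith)).mono_set fun x hx => ⟨by linarith [hx.1], hx.2⟩
  have hA2 := lintegral_Ioc_le_lintegral_A2op hδa.le hl_int.aemeasurable.ennreal_ofReal
  rw [add_sub_cancel_right] at hA2
  have hA2m : ∫⁻ t in Ioc T (T + a), A2op (fun s => ENNReal.ofReal (l s)) t ≤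
      ∫⁻ t in Ioc T (T + a), ENNReal.ofReal (m t) :=
    lintegral_mono_ae (ae_restrict_of_ae_restrict_of_subset
      (fun t ht => lt_of_le_of_lt hT ht.1) hyp)
  have hδa_lt : δ * a < a := by nlinarith
  rw [intervalIntegral.integral_of_le (show T ≤ T + a by linarith),
    intervalIntegral.integral_of_le (show T + δ * a ≤ T + a by linarith),
    ← ENNReal.ofReal_le_ofReal_iff (setIntegral_nonneg measurableSet_Ioc fun t _ => hm t),
    ENNReal.ofReal_mul (intervalIntegral.integral_nonneg hδa.le
      fun u hu => mul_nonneg hu.1 (Real.exp_nonneg _)),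
    ofReal_integral_eq_lintegral_ofReal hl_int (ae_of_all _ hl),
    ofReal_integral_eq_lintegral_ofReal hm_int (ae_of_all _ hm)]
  exact hA2.trans hA2m
end
end

section
/- Assume (H1). Then there exists a constant C' (depending only on the constants C and θ in (H1)) such that for all a, b ∈ W: (i) sup_{λ ∈ [0,1]} G(a + λb) ≤ C'(1 + G(a) + ‖b‖_W^{1/(1-θ)}); and (ii) for every δ ≠ 0, |G(a+δb) − G(a)| ≤ C'|δ| ‖b‖_W (1 + G(a) + |δ|^{1/(1-θ)} ‖b‖_W^{1/(1-θ)}). -/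
open MeasureTheory ENNReal Filter Set
open scoped RealInnerProductSpace NNReal

noncomputable section

variable {n : ℕ}

/-! Along the segment `t ↦ a + t • b` the function `g(t) = G(a + t b)` satisfies
`|g'| ≤ 2C‖b‖(1 + g)^θ`, so `(1 + g)^(1-θ)` is `2C‖b‖`-Lipschitz. Raising back to the power
`1/(1-θ)` bounds `G` on the segment by `1 + G(a) + ‖b‖^(1/(1-θ))`; integrating the derivative
bound once more gives the Lipschitz estimate. -/

theorem Real.rpow_add_le_mul_rpow_add_rpow {x y p : ℝ} (hx : 0 ≤ x) (hy : 0 ≤ y) (hp : 1 ≤ p) :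
    (x + y) ^ p ≤ 2 ^ (p - 1) * (x ^ p + y ^ p) := by
  lift x to ℝ≥0 using hx
  lift y to ℝ≥0 using hy
  exact_mod_cast NNReal.rpow_add_le_mul_rpow_add_rpow x y hp

theorem Real.one_add_rpow_le_two_mul_rpow {x θ : ℝ} (hx : 0 ≤ x) (hθ : 0 ≤ θ) :
    1 + x ^ θ ≤ 2 * (1 + x) ^ θ := by
  have h1 : 1 ≤ (1 + x) ^ θ := Real.one_le_rpow (by linarith) hθ
  have h2 : x ^ θ ≤ (1 + x) ^ θ := Real.rpow_le_rpow hx (by linarith) hθ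
  linarith

theorem abs_one_add_rpow_sub_le_of_abs_deriv_le {f f' : ℝ → ℝ} {K θ : ℝ} (hθ : θ < 1)
    (hf_nonneg : ∀ t, 0 ≤ f t) (hf : ∀ t, HasDerivAt f (f' t) t)
    (hf' : ∀ t, |f' t| ≤ K * (1 + f t) ^ θ) (s t : ℝ) :
    |(1 + f t) ^ (1 - θ) - (1 + f s) ^ (1 - θ)| ≤ (1 - θ) * K * |t - s| := by
  have hpos : ∀ t, 0 < 1 + f t := fun t => by linarith [hf_nonneg t]
  have hderiv : ∀ t, HasDerivAt (fun t => (1 + f t) ^ (1 - θ))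
      (f' t * (1 - θ) * (1 + f t) ^ (1 - θ - 1)) t := fun t =>
    ((hf t).const_add 1).rpow_const (Or.inl (hpos t).ne')
  have hbound : ∀ t, ‖f' t * (1 - θ) * (1 + f t) ^ (1 - θ - 1)‖ ≤ (1 - θ) * K := by
    intro t
    have hcancel : (1 + f t) ^ θ * (1 + f t) ^ (1 - θ - 1) = 1 := by
      rw [← Real.rpow_add (hpos t)]; simp
    have hpow_nonneg : 0 ≤ (1 + f t) ^ (1 - θ - 1) := Real.rpow_nonneg (hpos t).le _
    calc ‖f' t * (1 - θ) * (1 + f t) ^ (1 - θ - 1)‖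
        = (1 - θ) * (|f' t| * (1 + f t) ^ (1 - θ - 1)) := by
          rw [Real.norm_eq_abs, abs_mul, abs_mul, abs_of_pos (sub_pos.2 hθ),
            abs_of_nonneg hpow_nonneg]
          ring
      _ ≤ (1 - θ) * (K * (1 + f t) ^ θ * (1 + f t) ^ (1 - θ - 1)) := by
          gcongr
          exact hf' t
      _ = (1 - θ) * K := by rw [mul_assoc K, hcancel, mul_one]
  simpa only [Real.norm_eq_abs] using convex_univ.norm_image_sub_le_of_norm_hasDerivWithin_le
    (fun t _ => (hderiv t).hasDerivWithinAt) (fun t _ => hbound t) (mem_univ s) (mem_univ t)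

namespace H1Data

variable {W : Type*} [NormedAddCommGroup W] [NormedSpace ℝ W] [CompleteSpace W]
  (P : H1Data n W)

theorem hasDerivAt_G_add_smul (a b : W) (t : ℝ) :
    HasDerivAt (fun s : ℝ => (P.G (P.ι (a + s • b))).toReal)
      (P.gradG (P.ι (a + t • b)) b) t := by
  have h : HasDerivAt (fun δ : ℝ => (P.G (P.ι (a + t • b + δ • b))).toReal)
      (P.gradG (P.ι (a + t • b)) b) (t - t) := by
    simpa only [sub_self] using P.hgrad (a + t • b) b
  simpa only [← add_assoc, add_assoc a, ← add_smul, add_sub_cancel] using h.comp_sub_const t t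

theorem abs_gradG_le (v h : W) :
    |P.gradG (P.ι v) h| ≤ 2 * P.CG * ‖h‖ * (1 + (P.G (P.ι v)).toReal) ^ P.θ :=
  calc |P.gradG (P.ι v) h|
      ≤ ‖P.gradG (P.ι v)‖ * ‖h‖ := (P.gradG (P.ι v)).le_opNorm h
    _ ≤ P.CG * (1 + (P.G (P.ι v)).toReal ^ P.θ) * ‖h‖ :=
        mul_le_mul_of_nonneg_right (P.grad_bound v) (norm_nonneg h)
    _ ≤ P.CG * (2 * (1 + (P.G (P.ι v)).toReal) ^ P.θ) * ‖h‖ := by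
        have := Real.one_add_rpow_le_two_mul_rpow (P.G (P.ι v)).toReal_nonneg P.hθ.1.le
        exact mul_le_mul_of_nonneg_right (mul_le_mul_of_nonneg_left this P.hCG) (norm_nonneg h)
    _ = 2 * P.CG * ‖h‖ * (1 + (P.G (P.ι v)).toReal) ^ P.θ := by ring

theorem one_le_one_div_one_sub_θ : 1 ≤ 1 / (1 - P.θ) := by
  rw [le_div_iff₀ (by linarith [P.hθ.2])]
  linarith [P.hθ.1]

def growthConst : ℝ :=
  2 ^ (1 / (1 - P.θ) - 1) * (1 + (2 * P.CG) ^ (1 / (1 - P.θ)))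

theorem growthConst_nonneg : 0 ≤ P.growthConst := by
  unfold growthConst
  have := Real.rpow_nonneg (by linarith [P.hCG] : (0 : ℝ) ≤ 2 * P.CG) (1 / (1 - P.θ))
  positivity

theorem one_add_G_add_le (a b : W) :
    1 + (P.G (P.ι (a + b))).toReal ≤
      P.growthConst * (1 + (P.G (P.ι a)).toReal + ‖b‖ ^ (1 / (1 - P.θ))) := by
  set p := 1 / (1 - P.θ)
  set g : ℝ → ℝ := fun t => (P.G (P.ι (a + t • b))).toReal
  set K := 2 * P.CG * ‖b‖
  have hθ : 0 < 1 - P.θ := sub_pos.2 P.hθ.2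
  have hK : 0 ≤ K := by have := P.hCG; positivity
  have hg_nonneg : ∀ t, 0 ≤ g t := fun _ => ENNReal.toReal_nonneg
  have hLip := abs_one_add_rpow_sub_le_of_abs_deriv_le P.hθ.2 hg_nonneg
    (P.hasDerivAt_G_add_smul a b) (fun t => P.abs_gradG_le _ b) 0 1
  have hstep : (1 + g 1) ^ (1 - P.θ) ≤ (1 + g 0) ^ (1 - P.θ) + K := by
    have := (abs_le.1 hLip).2
    simp only [sub_zero, abs_one, mul_one] at this
    nlinarith [P.hθ.1]
  have hinv : ∀ x : ℝ, 0 ≤ x → (x ^ (1 - P.θ)) ^ p = x := fun x hx => by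
    simp only [p, one_div]; exact Real.rpow_rpow_inv hx hθ.ne'
  have hg1 : g 1 = (P.G (P.ι (a + b))).toReal := by simp only [g, one_smul]
  have hg0 : g 0 = (P.G (P.ι a)).toReal := by simp only [g, zero_smul, add_zero]
  calc 1 + (P.G (P.ι (a + b))).toReal = ((1 + g 1) ^ (1 - P.θ)) ^ p := by
        rw [hinv _ (by linarith [hg_nonneg 1]), hg1]
    _ ≤ ((1 + g 0) ^ (1 - P.θ) + K) ^ p := by gcongr
    _ ≤ 2 ^ (p - 1) * (((1 + g 0) ^ (1 - P.θ)) ^ p + K ^ p) :=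
        Real.rpow_add_le_mul_rpow_add_rpow (by positivity) hK P.one_le_one_div_one_sub_θ
    _ = 2 ^ (p - 1) * (1 + (P.G (P.ι a)).toReal + (2 * P.CG) ^ p * ‖b‖ ^ p) := by
        rw [hinv _ (by linarith [hg_nonneg 0]), hg0,
          Real.mul_rpow (by linarith [P.hCG]) (norm_nonneg b)]
    _ ≤ P.growthConst * (1 + (P.G (P.ι a)).toReal + ‖b‖ ^ p) := by
        have hc : 0 ≤ (2 * P.CG) ^ p := Real.rpow_nonneg (by linarith [P.hCG]) p
        have hb : 0 ≤ ‖b‖ ^ p := Real.rpow_nonneg (norm_nonneg b) p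
        have hGa : 0 ≤ (P.G (P.ι a)).toReal := ENNReal.toReal_nonneg
        show _ ≤ 2 ^ (p - 1) * (1 + (2 * P.CG) ^ p) * _
        rw [mul_assoc]
        gcongr
        nlinarith [mul_nonneg hc hGa]

theorem one_add_G_add_smul_le (a b : W) {t : ℝ} (ht : t ∈ Icc (0 : ℝ) 1) :
    1 + (P.G (P.ι (a + t • b))).toReal ≤
      P.growthConst * (1 + (P.G (P.ι a)).toReal + ‖b‖ ^ (1 / (1 - P.θ))) := by
  have hnorm : ‖t • b‖ ≤ ‖b‖ := by
    rw [norm_smul, Real.norm_eq_abs, abs_of_nonneg ht.1]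
    exact mul_le_of_le_one_left (norm_nonneg b) ht.2
  have hp0 : 0 ≤ 1 / (1 - P.θ) := by linarith [P.one_le_one_div_one_sub_θ]
  calc 1 + (P.G (P.ι (a + t • b))).toReal
      ≤ P.growthConst * (1 + (P.G (P.ι a)).toReal + ‖t • b‖ ^ (1 / (1 - P.θ))) :=
        P.one_add_G_add_le a (t • b)
    _ ≤ P.growthConst * (1 + (P.G (P.ι a)).toReal + ‖b‖ ^ (1 / (1 - P.θ))) := by
        have := P.growthConst_nonneg
        gcongr

theorem abs_G_add_sub_le (a b : W) :
    |(P.G (P.ι (a + b))).toReal - (P.G (P.ι a)).toReal| ≤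
      2 * P.CG * P.growthConst * ‖b‖ *
        (1 + (P.G (P.ι a)).toReal + ‖b‖ ^ (1 / (1 - P.θ))) := by
  have hbound : ∀ t ∈ Ico (0 : ℝ) 1, ‖P.gradG (P.ι (a + t • b)) b‖ ≤
      2 * P.CG * P.growthConst * ‖b‖ *
        (1 + (P.G (P.ι a)).toReal + ‖b‖ ^ (1 / (1 - P.θ))) := by
    intro t ht
    have hG : 1 ≤ 1 + (P.G (P.ι (a + t • b))).toReal :=
      le_add_of_nonneg_right ENNReal.toReal_nonneg
    have hCb : 0 ≤ 2 * P.CG * ‖b‖ := by have := P.hCG; positivity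
    calc ‖P.gradG (P.ι (a + t • b)) b‖
        ≤ 2 * P.CG * ‖b‖ * (1 + (P.G (P.ι (a + t • b))).toReal) ^ P.θ :=
          P.abs_gradG_le _ b
      _ ≤ 2 * P.CG * ‖b‖ * (1 + (P.G (P.ι (a + t • b))).toReal) := by
          gcongr; exact Real.rpow_le_self_of_one_le hG P.hθ.2.le
      _ ≤ 2 * P.CG * ‖b‖ *
            (P.growthConst * (1 + (P.G (P.ι a)).toReal + ‖b‖ ^ (1 / (1 - P.θ)))) := by
          gcongr; exact P.one_add_G_add_smul_le a b (Ico_subset_Icc_self ht)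
      _ = _ := by ring
  have h := norm_image_sub_le_of_norm_deriv_le_segment_01'
    (fun t _ => (P.hasDerivAt_G_add_smul a b t).hasDerivWithinAt) hbound
  simpa only [one_smul, zero_smul, add_zero, Real.norm_eq_abs] using h

end H1Data

/-- consequences (2.13) and (2.16) of assumption (H1):
growth along segments and Lipschitz estimate. -/
theorem statement_17 {n : ℕ} {W : Type*}
    [NormedAddCommGroup W] [NormedSpace ℝ W] [CompleteSpace W]
    (P : H1Data n W) :
    ∃ C' : ℝ, 0 ≤ C' ∧ ∀ a b : W,
      (∀ lam ∈ Set.Icc (0 : ℝ) 1,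
        (P.G (P.ι (a + lam • b))).toReal ≤
          C' * (1 + (P.G (P.ι a)).toReal + ‖b‖ ^ (1 / (1 - P.θ)))) ∧
      (∀ δ : ℝ, δ ≠ 0 →
        |(P.G (P.ι (a + δ • b))).toReal - (P.G (P.ι a)).toReal| ≤
          C' * |δ| * ‖b‖ *
            (1 + (P.G (P.ι a)).toReal +
              |δ| ^ (1 / (1 - P.θ)) * ‖b‖ ^ (1 / (1 - P.θ)))) := by
  have hC := P.growthConst_nonneg
  have hCG := P.hCG
  refine ⟨(1 + 2 * P.CG) * P.growthConst, by positivity, fun a b => ⟨?_, fun δ _ => ?_⟩⟩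
  · intro lam hlam
    have hbase : 0 ≤ 1 + (P.G (P.ι a)).toReal + ‖b‖ ^ (1 / (1 - P.θ)) := by positivity
    nlinarith [P.one_add_G_add_smul_le a b hlam, mul_nonneg (mul_nonneg hCG hC) hbase]
  · have h := P.abs_G_add_sub_le a (δ • b)
    rw [norm_smul, Real.norm_eq_abs, Real.mul_rpow (abs_nonneg δ) (norm_nonneg b)] at h
    have hrest : 0 ≤ P.growthConst * (|δ| * ‖b‖) *
        (1 + (P.G (P.ι a)).toReal + |δ| ^ (1 / (1 - P.θ)) * ‖b‖ ^ (1 / (1 - P.θ))) := by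
      positivity
    nlinarith

end
end
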